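/- arXiv:2504.03560 — 2 statements merged into one kernel-verified Lean document; each statement's English description precedes it below -/
import Mathlib

section
/- Let A be a real p×s matrix, and let P = I - Aᵀ(AAᵀ)†A be the orthogonal projector onto the null space of A, where † denotes the Moore–Penrose pseudoinverse. Let H be a symmetric positive definite s×s matrix and let Q = P H P. Then Q Q† = P and Q† Q = P. -/
/-!
Positive definiteness of `H` gives `(PX)ᵀ H (PX) = Xᵀ Q X`, so `Q X = 0` forces `P X = 0`:
`Q` and the orthogonal projector `P` have the same kernel. Hence `Q†Q`, the orthogonal
projector onto `(ker Q)ᗮ`, equals `P`, and since `Q` and then `Q†` are symmetric,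
`QQ† = (Q†Q)ᵀ = P`.
-/

open Matrix

/-- `Md` is the Moore–Penrose pseudoinverse of `M` (characterized by the four
Penrose conditions, which determine it uniquely). -/
def IsMoorePenroseInv {n : Type*} [Fintype n] (M Md : Matrix n n ℝ) : Prop :=
  M * Md * M = M ∧ Md * M * Md = Md ∧ (M * Md)ᵀ = M * Md ∧ (Md * M)ᵀ = Md * M

namespace IsMoorePenroseInv

variable {n : Type*} [Fintype n] {M X Y : Matrix n n ℝ}

theorem unique (hX : IsMoorePenroseInv M X) (hY : IsMoorePenroseInv M Y) : X = Y := by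
  obtain ⟨hX1, hX2, hX3, hX4⟩ := hX
  obtain ⟨hY1, hY2, hY3, hY4⟩ := hY
  have hMX : M * X = M * Y :=
    calc M * X = (M * Y) * (M * X) := by rw [← Matrix.mul_assoc, hY1]
    _ = (M * Y)ᵀ * (M * X)ᵀ := by rw [hY3, hX3]
    _ = (M * X * M * Y)ᵀ := by simp only [transpose_mul, Matrix.mul_assoc]
    _ = M * Y := by rw [hX1, hY3]
  have hXM : X * M = Y * M :=
    calc X * M = (X * M) * (Y * M) := by rw [Matrix.mul_assoc, ← Matrix.mul_assoc M, hY1]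
    _ = (X * M)ᵀ * (Y * M)ᵀ := by rw [hX4, hY4]
    _ = (Y * (M * X * M))ᵀ := by simp only [transpose_mul, Matrix.mul_assoc]
    _ = Y * M := by rw [hX1, hY4]
  calc X = X * M * X := hX2.symm
  _ = Y * M * Y := by rw [Matrix.mul_assoc, hMX, ← Matrix.mul_assoc, hXM]
  _ = Y := hY2

theorem transpose (h : IsMoorePenroseInv M X) : IsMoorePenroseInv Mᵀ Xᵀ := by
  obtain ⟨h1, h2, h3, h4⟩ := h
  refine ⟨?_, ?_, ?_, ?_⟩
  · rw [← transpose_mul, ← transpose_mul, ← Matrix.mul_assoc, h1]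
  · rw [← transpose_mul, ← transpose_mul, ← Matrix.mul_assoc, h2]
  · rw [← transpose_mul, h4]; exact h4
  · rw [← transpose_mul, h3]; exact h3

theorem transpose_eq_self (hM : Mᵀ = M) (h : IsMoorePenroseInv M X) : Xᵀ = X :=
  (hM ▸ h.transpose).unique h

theorem mul_eq_transpose_inv_mul (hM : Mᵀ = M) (h : IsMoorePenroseInv M X) :
    M * X = (X * M)ᵀ := by
  rw [transpose_mul, hM, h.transpose_eq_self hM]

theorem inv_mul_eq_of_ker [DecidableEq n] {P : Matrix n n ℝ} (h : IsMoorePenroseInv M X)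
    (hP : Pᵀ = P) (hMP : M * P = M) (hker : ∀ Z : Matrix n n ℝ, M * Z = 0 → P * Z = 0) : X * M = P := by
  obtain ⟨h1, -, -, h4⟩ := h
  have hPXM : P * (X * M) = P := by
    have := hker (1 - X * M) (by rw [Matrix.mul_sub, Matrix.mul_one, ← Matrix.mul_assoc, h1,
      sub_self])
    rwa [Matrix.mul_sub, Matrix.mul_one, sub_eq_zero, eq_comm] at this
  calc X * M = X * M * P := by rw [Matrix.mul_assoc, hMP]
  _ = (P * (X * M))ᵀ := by rw [transpose_mul, h4, hP]
  _ = P := by rw [hPXM, hP]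

end IsMoorePenroseInv

section Projection

variable {m n : Type*} [Fintype m] [Fintype n] [DecidableEq n]
  {A : Matrix m n ℝ} {Bd : Matrix m m ℝ}

theorem isIdempotentElem_one_sub_transpose_mul_mul (hBd : IsMoorePenroseInv (A * Aᵀ) Bd) :
    IsIdempotentElem (1 - Aᵀ * Bd * A) := by
  refine IsIdempotentElem.one_sub ?_
  calc Aᵀ * Bd * A * (Aᵀ * Bd * A) = Aᵀ * (Bd * (A * Aᵀ) * Bd) * A := by
        simp only [Matrix.mul_assoc]
  _ = Aᵀ * Bd * A := by rw [hBd.2.1]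

theorem transpose_one_sub_transpose_mul_mul (hBd : IsMoorePenroseInv (A * Aᵀ) Bd) :
    (1 - Aᵀ * Bd * A)ᵀ = 1 - Aᵀ * Bd * A := by
  have hBdT : Bdᵀ = Bd :=
    hBd.transpose_eq_self (by rw [transpose_mul, transpose_transpose])
  rw [transpose_sub, transpose_one, transpose_mul, transpose_mul, transpose_transpose, hBdT,
    Matrix.mul_assoc]

end Projection

theorem Matrix.PosDef.eq_zero_of_transpose_mul_mul_eq_zero {m n : Type*} [Fintype m]
    [Fintype n] {H : Matrix n n ℝ} (hH : H.PosDef) {Z : Matrix n m ℝ} (h : Zᵀ * H * Z = 0) :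
    Z = 0 := by
  ext i j
  by_contra hij
  have hcol : Zᵀ j ≠ 0 := fun h0 => hij (congrFun h0 i)
  have hpos := hH.dotProduct_mulVec_pos hcol
  have hdiag : star (Zᵀ j) ⬝ᵥ (H *ᵥ Zᵀ j) = (Zᵀ * H * Z) j j := by
    rw [star_trivial, dotProduct_mulVec, mul_apply]
    rfl
  rw [hdiag, h, zero_apply] at hpos
  exact lt_irrefl 0 hpos

theorem Matrix.PosDef.mul_eq_zero_of_transpose_mul_mul_mul_eq_zero {m n : Type*} [Fintype m]
    [Fintype n] {H : Matrix n n ℝ} (hH : H.PosDef) {P : Matrix n m ℝ} {Z : Matrix m m ℝ}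
    (h : Pᵀ * H * P * Z = 0) : P * Z = 0 :=
  hH.eq_zero_of_transpose_mul_mul_eq_zero <| by
    rw [transpose_mul, Matrix.mul_assoc, Matrix.mul_assoc, ← Matrix.mul_assoc H,
      ← Matrix.mul_assoc Pᵀ, ← Matrix.mul_assoc Pᵀ, h, Matrix.mul_zero]

theorem stmt0_general (p s : ℕ) (A : Matrix (Fin p) (Fin s) ℝ)
    (Bd : Matrix (Fin p) (Fin p) ℝ) (hBd : IsMoorePenroseInv (A * Aᵀ) Bd)
    (P : Matrix (Fin s) (Fin s) ℝ) (hP : P = 1 - Aᵀ * Bd * A)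
    (H : Matrix (Fin s) (Fin s) ℝ) (hHpd : H.PosDef)
    (Q : Matrix (Fin s) (Fin s) ℝ) (hQ : Q = P * H * P)
    (Qd : Matrix (Fin s) (Fin s) ℝ) (hQd : IsMoorePenroseInv Q Qd) :
    Q * Qd = P ∧ Qd * Q = P := by
  have hPsymm : Pᵀ = P := hP ▸ transpose_one_sub_transpose_mul_mul hBd
  have hPidem : P * P = P := hP ▸ isIdempotentElem_one_sub_transpose_mul_mul hBd
  have hHsymm : Hᵀ = H := hHpd.isHermitian.eq
  have hQsymm : Qᵀ = Q := by
    rw [hQ, transpose_mul, transpose_mul, hPsymm, hHsymm, Matrix.mul_assoc]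
  have hQP : Q * P = Q := by rw [hQ, Matrix.mul_assoc, hPidem]
  have hinv_mul : Qd * Q = P := hQd.inv_mul_eq_of_ker hPsymm hQP fun Z hZ =>
    hHpd.mul_eq_zero_of_transpose_mul_mul_mul_eq_zero (by rwa [hPsymm, ← hQ])
  exact ⟨by rw [hQd.mul_eq_transpose_inv_mul hQsymm, hinv_mul, hPsymm], hinv_mul⟩

theorem stmt0 (p s : ℕ) (A : Matrix (Fin p) (Fin s) ℝ)
    (Bd : Matrix (Fin p) (Fin p) ℝ) (hBd : IsMoorePenroseInv (A * Aᵀ) Bd)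
    (P : Matrix (Fin s) (Fin s) ℝ) (hP : P = 1 - Aᵀ * Bd * A)
    (H : Matrix (Fin s) (Fin s) ℝ) (hHsymm : Hᵀ = H) (hHpd : H.PosDef)
    (Q : Matrix (Fin s) (Fin s) ℝ) (hQ : Q = P * H * P)
    (Qd : Matrix (Fin s) (Fin s) ℝ) (hQd : IsMoorePenroseInv Q Qd) :
    Q * Qd = P ∧ Qd * Q = P :=
  stmt0_general p s A Bd hBd P hP H hHpd Q hQ Qd hQd
end

section
/- Let (R_n), (A_n), (B_n), (C_n) be sequences of nonnegative random variables adapted to a filtration (ℱ_n) satisfying E[R_{n+1} | ℱ_n] ≤ (1 + A_n) R_n + B_n - C_n for all n. Then on the event {Σ_n A_n < ∞ and Σ_n B_n < ∞}, R_n converges almost surely to a finite random variable R_∞, and Σ_n C_n < ∞ almost surely. -/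
/-!
Dividing by the compounded factor `P n = ∏_{k<n} (1 + A k)`, which is `ℱ (n - 1)`-measurable,
turns the hypothesis into the supermartingale property of
`Z n = R n / P n + ∑_{k<n} (C k - B k) / P (k + 1)`.
This `Z` is bounded below by the predictable process `-∑_{k<n} B k / P (k + 1)`; stopping `Z`
when that process first exceeds a level `N` gives a supermartingale bounded below, hence
convergent a.s., and on `{∑ B < ∞}` the process `Z` agrees with one of these stopped processes.
Where moreover `∑ A < ∞`, `P n` converges to a finite limit, and the convergence of `R` and the
summability of `C` are read off from the convergence of `Z` deterministically.
-/

open MeasureTheory Filter Topology Finset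

namespace MeasureTheory

variable {Ω : Type*} {m : MeasurableSpace Ω} {μ : Measure Ω} [IsFiniteMeasure μ]
  {ℱ : Filtration ℕ m} {Z : ℕ → Ω → ℝ}

theorem Supermartingale.sum_mul_sub {R : ℝ} {ξ : ℕ → Ω → ℝ} (hZ : Supermartingale Z ℱ μ)
    (hξ : StronglyAdapted ℱ ξ) (hbdd : ∀ n ω, ξ n ω ≤ R) (hnonneg : ∀ n ω, 0 ≤ ξ n ω) :
    Supermartingale (fun n => ∑ k ∈ range n, ξ k * (Z (k + 1) - Z k)) ℱ μ := by
  have hneg : (fun n => ∑ k ∈ range n, ξ k * (Z (k + 1) - Z k))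
      = -fun n => ∑ k ∈ range n, ξ k * ((-Z) (k + 1) - (-Z) k) := by
    funext n
    simp only [Pi.neg_apply, ← Finset.sum_neg_distrib]
    exact Finset.sum_congr rfl fun k _ => by ring
  exact hneg ▸ (hZ.neg.sum_mul_sub hξ hbdd hnonneg).neg

theorem Supermartingale.exists_ae_tendsto_of_forall_le (hZ : Supermartingale Z ℱ μ) {K : ℝ}
    (hK : ∀ n ω, K ≤ Z n ω) : ∀ᵐ ω ∂μ, ∃ c, Tendsto (fun n => Z n ω) atTop (𝓝 c) := by
  have hbdd : ∀ n, eLpNorm ((-Z) n) 1 μ ≤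
      (Real.toNNReal (∫ ω, Z 0 ω ∂μ + μ.real Set.univ * (2 * |K|)) : ENNReal) := by
    intro n
    have hint := hZ.integrable n
    have hnorm : ∀ ω, ‖Z n ω‖ ≤ Z n ω + 2 * |K| := fun ω =>
      abs_le.2 ⟨by linarith [neg_abs_le K, hK n ω], by linarith [abs_nonneg K]⟩
    have hmean : ∫ ω, Z n ω ∂μ ≤ ∫ ω, Z 0 ω ∂μ := by
      simpa using hZ.setIntegral_le (Nat.zero_le n) MeasurableSet.univ
    rw [Pi.neg_apply, eLpNorm_neg, eLpNorm_one_eq_lintegral_enorm,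
      ← ofReal_integral_norm_eq_lintegral_enorm hint]
    refine ENNReal.ofReal_le_ofReal ?_
    calc ∫ ω, ‖Z n ω‖ ∂μ ≤ ∫ ω, (Z n ω + 2 * |K|) ∂μ :=
          integral_mono hint.norm (hint.add (integrable_const _)) hnorm
      _ = ∫ ω, Z n ω ∂μ + μ.real Set.univ * (2 * |K|) := by
          rw [integral_add hint (integrable_const _), integral_const, smul_eq_mul]
      _ ≤ _ := by linarith
  filter_upwards [hZ.neg.exists_ae_tendsto_of_bdd hbdd] with ω ⟨c, hc⟩
  exact ⟨-c, by simpa using hc.neg⟩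

/-- For decreasing `G k`, this is `Z` stopped at the first time `k` with `ω ∉ G k`. -/
noncomputable def indicatorTransform (Z : ℕ → Ω → ℝ) (G : ℕ → Set Ω) (n : ℕ) (ω : Ω) : ℝ :=
  Z 0 ω + ∑ k ∈ range n, (G k).indicator 1 ω * (Z (k + 1) ω - Z k ω)

theorem indicatorTransform_succ_of_notMem {G : ℕ → Set Ω} {n : ℕ} {ω : Ω} (hω : ω ∉ G n) :
    indicatorTransform Z G (n + 1) ω = indicatorTransform Z G n ω := by
  simp [indicatorTransform, Finset.sum_range_succ, hω]

theorem indicatorTransform_eq_of_forall_mem {G : ℕ → Set Ω} {n : ℕ} {ω : Ω}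
    (hω : ∀ k < n, ω ∈ G k) : indicatorTransform Z G n ω = Z n ω := by
  have hsum : ∑ k ∈ range n, (G k).indicator 1 ω * (Z (k + 1) ω - Z k ω)
      = ∑ k ∈ range n, (Z (k + 1) ω - Z k ω) :=
    Finset.sum_congr rfl fun k hk => by simp [hω k (Finset.mem_range.1 hk)]
  rw [indicatorTransform, hsum, Finset.sum_range_sub (fun k => Z k ω)]
  ring

theorem Supermartingale.indicatorTransform (hZ : Supermartingale Z ℱ μ) {G : ℕ → Set Ω}
    (hG : ∀ k, MeasurableSet[ℱ k] (G k)) : Supermartingale (indicatorTransform Z G) ℱ μ := by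
  have hξ : StronglyAdapted ℱ fun k => (G k).indicator (1 : Ω → ℝ) := fun k =>
    stronglyMeasurable_const.indicator (hG k)
  have hsum := hZ.sum_mul_sub hξ (fun k ω => Set.indicator_le_self' (fun _ _ => zero_le_one) ω)
    (fun k ω => Set.indicator_nonneg (fun _ _ => zero_le_one) ω)
  have hconst := martingale_const_fun ℱ μ (hZ.stronglyMeasurable 0) (hZ.integrable 0)
  have heq : MeasureTheory.indicatorTransform Z G
      = (fun n => ∑ k ∈ range n, (G k).indicator 1 * (Z (k + 1) - Z k)) + fun _ => Z 0 := by
    funext n ω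
    simp [MeasureTheory.indicatorTransform, add_comm]
  exact heq ▸ hsum.add_martingale hconst

def boundedUntil (S : ℕ → Ω → ℝ) (N : ℝ) (k : ℕ) : Set Ω := {ω | ∀ j ≤ k, S (j + 1) ω ≤ N}

theorem neg_le_indicatorTransform {S : ℕ → Ω → ℝ} (hS0 : S 0 = 0) (hZS : ∀ n ω, -S n ω ≤ Z n ω)
    {N : ℝ} (hN : 0 ≤ N) (n : ℕ) (ω : Ω) :
    -N ≤ indicatorTransform Z (boundedUntil S N) n ω := by
  induction n with
  | zero =>
    have h0 := hZS 0 ω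
    rw [hS0, Pi.zero_apply, neg_zero] at h0
    simp only [indicatorTransform, range_zero, sum_empty, add_zero]
    linarith
  | succ n ih =>
    by_cases hω : ω ∈ boundedUntil S N n
    · rw [indicatorTransform_eq_of_forall_mem (G := boundedUntil S N)
        fun k hk j hj => hω j (by omega)]
      exact (neg_le_neg (hω n le_rfl)).trans (hZS (n + 1) ω)
    · rwa [indicatorTransform_succ_of_notMem hω]

theorem Supermartingale.exists_ae_tendsto_of_neg_le (hZ : Supermartingale Z ℱ μ)
    {S : ℕ → Ω → ℝ} (hS : Adapted ℱ fun n => S (n + 1)) (hS0 : S 0 = 0)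
    (hZS : ∀ n ω, -S n ω ≤ Z n ω) :
    ∀ᵐ ω ∂μ, BddAbove (Set.range fun n => S n ω) → ∃ c, Tendsto (fun n => Z n ω) atTop (𝓝 c) := by
  have hlevel : ∀ N : ℕ, ∀ᵐ ω ∂μ, (∀ n, S n ω ≤ N) →
      ∃ c, Tendsto (fun n => Z n ω) atTop (𝓝 c) := by
    intro N
    have hG : ∀ k, MeasurableSet[ℱ k] (boundedUntil S N k) := fun k => by
      simp only [boundedUntil, Set.ofPred_forall]
      exact .iInter fun j => .iInter fun hj => measurableSet_le (hS.measurable_le hj)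
        measurable_const
    filter_upwards [(hZ.indicatorTransform hG).exists_ae_tendsto_of_forall_le
      (neg_le_indicatorTransform hS0 hZS N.cast_nonneg)] with ω ⟨c, hc⟩ hSω
    exact ⟨c, hc.congr fun n => indicatorTransform_eq_of_forall_mem (G := boundedUntil S N)
      fun k _ j _ => hSω (j + 1)⟩
  filter_upwards [ae_all_iff.2 hlevel] with ω hω ⟨M, hM⟩
  exact hω ⌈M⌉₊ fun n => (hM ⟨n, rfl⟩).trans (Nat.le_ceil M)

end MeasureTheory

namespace RobbinsSiegmund

def compound (a : ℕ → ℝ) (n : ℕ) : ℝ := ∏ k ∈ range n, (1 + a k)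

noncomputable def discountedSum (p b : ℕ → ℝ) (n : ℕ) : ℝ := ∑ k ∈ range n, b k / p (k + 1)

noncomputable def compensated (r p b c : ℕ → ℝ) (n : ℕ) : ℝ :=
  r n / p n + discountedSum p c n - discountedSum p b n

variable {a b c p r : ℕ → ℝ}

theorem compound_succ (a : ℕ → ℝ) (n : ℕ) : compound a (n + 1) = compound a n * (1 + a n) :=
  prod_range_succ _ _

theorem one_le_compound (ha : ∀ k, 0 ≤ a k) (n : ℕ) : 1 ≤ compound a n :=
  one_le_prod fun k _ => le_add_of_nonneg_right (ha k)

theorem compound_pos (ha : ∀ k, 0 ≤ a k) (n : ℕ) : 0 < compound a n :=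
  zero_lt_one.trans_le (one_le_compound ha n)

theorem tendsto_compound (ha : Summable a) :
    Tendsto (compound a) atTop (𝓝 (∏' k, (1 + a k))) :=
  (Real.multipliable_one_add_of_summable ha).hasProd.tendsto_prod_nat

theorem discountedSum_zero (p b : ℕ → ℝ) : discountedSum p b 0 = 0 := sum_range_zero _

theorem discountedSum_succ (p b : ℕ → ℝ) (n : ℕ) :
    discountedSum p b (n + 1) = discountedSum p b n + b n / p (n + 1) :=
  sum_range_succ _ _

theorem summable_div_of_one_le (hp : ∀ n, 1 ≤ p n) (hb : ∀ n, 0 ≤ b n) (hsum : Summable b) :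
    Summable fun k => b k / p (k + 1) :=
  hsum.of_nonneg_of_le (fun k => div_nonneg (hb k) (zero_le_one.trans (hp _)))
    fun k => div_le_self (hb k) (hp _)

theorem discountedSum_le_tsum (hp : ∀ n, 1 ≤ p n) (hb : ∀ n, 0 ≤ b n) (hsum : Summable b)
    (n : ℕ) : discountedSum p b n ≤ ∑' k, b k :=
  (sum_le_sum fun k _ => div_le_self (hb k) (hp _)).trans (hsum.sum_le_tsum _ fun k _ => hb k)

theorem neg_discountedSum_le_compensated (hp : ∀ n, 0 < p n) (hr : ∀ n, 0 ≤ r n)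
    (hc : ∀ n, 0 ≤ c n) (n : ℕ) : -discountedSum p b n ≤ compensated r p b c n := by
  have hcsum : 0 ≤ discountedSum p c n :=
    sum_nonneg fun k _ => div_nonneg (hc k) (hp _).le
  have := div_nonneg (hr n) (hp n).le
  rw [compensated]
  linarith

theorem compensated_eq (ha : ∀ k, 0 ≤ a k) (n : ℕ) :
    compensated r (compound a) b c n = ((1 + a n) * r n + b n - c n) / compound a (n + 1)
      + discountedSum (compound a) c (n + 1) - discountedSum (compound a) b (n + 1) := by
  have hp := (compound_pos ha n).ne'
  have ha' : 1 + a n ≠ 0 := by linarith [ha n]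
  simp only [compensated, discountedSum_succ, compound_succ]
  field_simp
  ring

theorem tendsto_and_summable_of_tendsto_compensated (hp : ∀ n, 1 ≤ p n) {q : ℝ}
    (hpq : Tendsto p atTop (𝓝 q)) (hr : ∀ n, 0 ≤ r n) (hb : ∀ n, 0 ≤ b n)
    (hc : ∀ n, 0 ≤ c n) (hbsum : Summable b) {ζ : ℝ}
    (hζ : Tendsto (compensated r p b c) atTop (𝓝 ζ)) :
    (∃ L, Tendsto r atTop (𝓝 L)) ∧ Summable c := by
  have hp0 : ∀ n, 0 < p n := fun n => zero_lt_one.trans_le (hp n)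
  have hb' := (summable_div_of_one_le hp hb hbsum).hasSum.tendsto_sum_nat
  have hW : Tendsto (fun n => r n / p n + discountedSum p c n) atTop
      (𝓝 (ζ + ∑' k, b k / p (k + 1))) :=
    (hζ.add hb').congr fun n => by simp only [compensated, discountedSum]; ring
  obtain ⟨M, hM⟩ := hW.bddAbove_range
  have hc' : Summable fun k => c k / p (k + 1) :=
    summable_of_sum_range_le (fun k => div_nonneg (hc k) (hp0 _).le) fun n =>
      (le_add_of_nonneg_left (div_nonneg (hr n) (hp0 n).le)).trans (hM ⟨n, rfl⟩)
  have hrp : Tendsto (fun n => r n / p n) atTop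
      (𝓝 ((ζ + ∑' k, b k / p (k + 1)) - ∑' k, c k / p (k + 1))) :=
    (hW.sub hc'.hasSum.tendsto_sum_nat).congr fun n => by simp [discountedSum]
  refine ⟨⟨_, (hrp.mul hpq).congr fun n => div_mul_cancel₀ _ (hp0 n).ne'⟩, ?_⟩
  obtain ⟨P, hP⟩ := hpq.bddAbove_range
  refine hc'.mul_right P |>.of_nonneg_of_le hc fun k => ?_
  calc c k = c k / p (k + 1) * p (k + 1) := (div_mul_cancel₀ _ (hp0 _).ne').symm
    _ ≤ c k / p (k + 1) * P :=
      mul_le_mul_of_nonneg_left (hP ⟨k + 1, rfl⟩) (div_nonneg (hc k) (hp0 _).le)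

variable {Ω : Type*} {m : MeasurableSpace Ω} {μ : Measure Ω} {ℱ : Filtration ℕ m}
  {R A B C : ℕ → Ω → ℝ}

theorem measurable_compound (hA : Adapted ℱ A) {n k : ℕ} (hk : k ≤ n + 1) :
    Measurable[ℱ n] fun ω => compound (A · ω) k :=
  Finset.measurable_prod _ fun i hi =>
    measurable_const.add (hA.measurable_le (by rw [mem_range] at hi; omega))

theorem measurable_discountedSum (hA : Adapted ℱ A) (hB : Adapted ℱ B) {n k : ℕ}
    (hk : k ≤ n + 1) : Measurable[ℱ n] fun ω => discountedSum (compound (A · ω)) (B · ω) k :=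
  Finset.measurable_sum _ fun i hi => by
    rw [mem_range] at hi
    exact (hB.measurable_le (by omega)).div (measurable_compound hA (by omega))

theorem integrable_div_compound (hA : Adapted ℱ A) (hA0 : ∀ n ω, 0 ≤ A n ω) {f : Ω → ℝ}
    (hf : Integrable f μ) (k : ℕ) : Integrable (fun ω => f ω / compound (A · ω) k) μ := by
  simp only [div_eq_inv_mul]
  refine hf.bdd_mul (c := 1) ?_ (Eventually.of_forall fun ω => ?_)
  · exact ((measurable_compound hA (Nat.le_succ k)).mono (ℱ.le k) le_rfl).inv.aestronglyMeasurable
  · rw [norm_inv, Real.norm_of_nonneg (compound_pos (hA0 · ω) k).le]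
    exact inv_le_one_of_one_le₀ (one_le_compound (hA0 · ω) k)

theorem integrable_discountedSum (hA : Adapted ℱ A) (hA0 : ∀ n ω, 0 ≤ A n ω)
    (hB : ∀ n, Integrable (B n) μ) (n : ℕ) :
    Integrable (fun ω => discountedSum (compound (A · ω)) (B · ω) n) μ :=
  integrable_finsetSum _ fun k _ => integrable_div_compound hA hA0 (hB k) (k + 1)

theorem supermartingale_compensated [IsFiniteMeasure μ] (hA0 : ∀ n ω, 0 ≤ A n ω)
    (hR : Adapted ℱ R) (hA : Adapted ℱ A) (hB : Adapted ℱ B) (hC : Adapted ℱ C)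
    (hRi : ∀ n, Integrable (R n) μ) (hBi : ∀ n, Integrable (B n) μ)
    (hCi : ∀ n, Integrable (C n) μ)
    (hstep : ∀ n, μ[R (n + 1) | ℱ n] ≤ᵐ[μ] fun ω => (1 + A n ω) * R n ω + B n ω - C n ω) :
    Supermartingale (fun n ω => compensated (R · ω) (compound (A · ω)) (B · ω) (C · ω) n) ℱ μ := by
  refine supermartingale_nat (fun n => ?_) (fun n => ?_) fun n => ?_
  · exact (((hR n).div (measurable_compound hA n.le_succ)).add
      (measurable_discountedSum hA hC n.le_succ)).sub
      (measurable_discountedSum hA hB n.le_succ) |>.stronglyMeasurable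
  · exact ((integrable_div_compound hA hA0 (hRi n) n).add
      (integrable_discountedSum hA hA0 hCi n)).sub (integrable_discountedSum hA hA0 hBi n)
  set D : Ω → ℝ := fun ω => (compound (A · ω) (n + 1))⁻¹
  set W : Ω → ℝ := fun ω => discountedSum (compound (A · ω)) (C · ω) (n + 1)
    - discountedSum (compound (A · ω)) (B · ω) (n + 1)
  have hD : StronglyMeasurable[ℱ n] D := (measurable_compound hA le_rfl).inv.stronglyMeasurable
  have hW : StronglyMeasurable[ℱ n] W :=
    ((measurable_discountedSum hA hC le_rfl).sub
      (measurable_discountedSum hA hB le_rfl)).stronglyMeasurable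
  have hWi : Integrable W μ :=
    (integrable_discountedSum hA hA0 hCi _).sub (integrable_discountedSum hA hA0 hBi _)
  have hDR : Integrable (D * R (n + 1)) μ := by
    convert integrable_div_compound hA hA0 (hRi (n + 1)) (n + 1) using 2 with ω
    exact mul_comm _ _
  have hsplit : (fun ω => compensated (R · ω) (compound (A · ω)) (B · ω) (C · ω) (n + 1))
      = D * R (n + 1) + W := by
    funext ω
    simp only [compensated, Pi.add_apply, Pi.mul_apply, D, W, div_eq_inv_mul]
    ring
  have hcond : μ[D * R (n + 1) + W | ℱ n] =ᵐ[μ] D * μ[R (n + 1) | ℱ n] + W := by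
    filter_upwards [condExp_add hDR hWi (ℱ n),
      condExp_mul_of_stronglyMeasurable_left hD hDR (hRi _)] with ω hsum hpull
    rw [hsum, Pi.add_apply, hpull, condExp_of_stronglyMeasurable (ℱ.le n) hW hWi, Pi.add_apply]
  filter_upwards [hcond, hstep n] with ω hω hstepω
  rw [hsplit, hω, compensated_eq (hA0 · ω) n, div_eq_inv_mul]
  have hD0 : 0 ≤ D ω := (inv_pos.2 (compound_pos (hA0 · ω) (n + 1))).le
  simp only [Pi.add_apply, Pi.mul_apply, W]
  linarith [mul_le_mul_of_nonneg_left hstepω hD0]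

end RobbinsSiegmund

open RobbinsSiegmund

theorem stmt9_general {Ω : Type*} {m : MeasurableSpace Ω} (μ : Measure Ω) [IsProbabilityMeasure μ]
    (ℱ : Filtration ℕ m)
    (R A B C : ℕ → Ω → ℝ)
    (hRnn : ∀ n ω, 0 ≤ R n ω) (hAnn : ∀ n ω, 0 ≤ A n ω)
    (hBnn : ∀ n ω, 0 ≤ B n ω) (hCnn : ∀ n ω, 0 ≤ C n ω)
    (hRad : Adapted ℱ R) (hAad : Adapted ℱ A) (hBad : Adapted ℱ B) (hCad : Adapted ℱ C)
    (hRint : ∀ n, Integrable (R n) μ)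
    (hBint : ∀ n, Integrable (B n) μ) (hCint : ∀ n, Integrable (C n) μ)
    (hstep : ∀ n, μ[R (n + 1) | ℱ n] ≤ᵐ[μ]
      fun ω => (1 + A n ω) * R n ω + B n ω - C n ω) :
    ∀ᵐ ω ∂μ, (Summable (fun n => A n ω) ∧ Summable (fun n => B n ω)) →
      ((∃ L : ℝ, Tendsto (fun n => R n ω) atTop (nhds L)) ∧
        Summable (fun n => C n ω)) := by
  have hZ := supermartingale_compensated hAnn hRad hAad hBad hCad hRint hBint hCint hstep
  have hconv := hZ.exists_ae_tendsto_of_neg_le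
    (fun n => measurable_discountedSum hAad hBad le_rfl) (funext fun ω => discountedSum_zero _ _)
    fun n ω => neg_discountedSum_le_compensated (compound_pos (hAnn · ω)) (hRnn · ω) (hCnn · ω) n
  filter_upwards [hconv] with ω hω ⟨hA, hB⟩
  obtain ⟨ζ, hζ⟩ := hω ⟨∑' k, B k ω, Set.forall_mem_range.2 fun n =>
    discountedSum_le_tsum (one_le_compound (hAnn · ω)) (hBnn · ω) hB n⟩
  exact tendsto_and_summable_of_tendsto_compensated (one_le_compound (hAnn · ω))
    (tendsto_compound hA) (hRnn · ω) (hBnn · ω) (hCnn · ω) hB hζ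

/-- Robbins–Siegmund almost-supermartingale convergence theorem. -/
theorem stmt9 {Ω : Type*} {m : MeasurableSpace Ω} (μ : Measure Ω) [IsProbabilityMeasure μ]
    (ℱ : Filtration ℕ m)
    (R A B C : ℕ → Ω → ℝ)
    (hRnn : ∀ n ω, 0 ≤ R n ω) (hAnn : ∀ n ω, 0 ≤ A n ω)
    (hBnn : ∀ n ω, 0 ≤ B n ω) (hCnn : ∀ n ω, 0 ≤ C n ω)
    (hRad : Adapted ℱ R) (hAad : Adapted ℱ A) (hBad : Adapted ℱ B) (hCad : Adapted ℱ C)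
    (hRint : ∀ n, Integrable (R n) μ) (hAint : ∀ n, Integrable (A n) μ)
    (hBint : ∀ n, Integrable (B n) μ) (hCint : ∀ n, Integrable (C n) μ)
    (hstep : ∀ n, μ[R (n + 1) | ℱ n] ≤ᵐ[μ]
      fun ω => (1 + A n ω) * R n ω + B n ω - C n ω) :
    ∀ᵐ ω ∂μ, (Summable (fun n => A n ω) ∧ Summable (fun n => B n ω)) →
      ((∃ L : ℝ, Tendsto (fun n => R n ω) atTop (nhds L)) ∧
        Summable (fun n => C n ω)) :=
  stmt9_general μ ℱ R A B C hRnn hAnn hBnn hCnn hRad hAad hBad hCad hRint hBint hCint hstep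
end
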